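/- arXiv:1709.05884 — 3 statements merged into one kernel-verified Lean document; each statement's English description precedes it below -/
import Mathlib

section
/- Let G be a topological group acting continuously on topological spaces X and Y such that the action on X is proper and the action on Y is proper and co-compact. Then every G-equivariant continuous map f : Y → X is a proper map. -/
open Filter Topology

/-!
Given an ultrafilter `𝒰` on `Y` with `f` tending to `x` along it, write `y = g y • z y` with
`z y` in the compact fundamental set `F`, so that `z` tends to some `z₀` along `𝒰`. By
equivariance `g y • f (z y) = f y`, hence the pairs `(f (z y), g y • f (z y))` converge to
`(f z₀, x)`, and properness of the action on `X` makes `g` converge to some `γ` along `𝒰`.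
Continuity of the action on `Y` then gives `y = g y • z y → γ • z₀`.
-/

theorem exists_tendsto_of_isProperMap_smul {G X ι : Type*} [SMul G X] [TopologicalSpace G]
    [TopologicalSpace X] (hX : IsProperMap (fun p : X × G => (p.1, p.2 • p.1)))
    {𝒰 : Ultrafilter ι} {x : ι → X} {g : ι → G} {a b : X} (hx : Tendsto x 𝒰 (𝓝 a))
    (hgx : Tendsto (fun i => g i • x i) 𝒰 (𝓝 b)) :
    ∃ γ : G, γ • a = b ∧ Tendsto g 𝒰 (𝓝 γ) := by
  have hpair : Tendsto (fun p : X × G => (p.1, p.2 • p.1))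
      (Ultrafilter.map (fun i => (x i, g i)) 𝒰) (𝓝 (a, b)) :=
    tendsto_map'_iff.2 (hx.prodMk_nhds hgx)
  obtain ⟨⟨a', γ⟩, hγ, hle⟩ := hX.ultrafilter_le_nhds_of_tendsto hpair
  obtain ⟨rfl, rfl⟩ := Prod.mk.inj hγ
  exact ⟨γ, rfl, (continuous_snd.tendsto _).comp hle⟩

theorem equivariant_map_is_proper_general
    {G X Y : Type*} [Group G] [TopologicalSpace G]
    [TopologicalSpace X] [TopologicalSpace Y]
    [MulAction G X] [MulAction G Y] [ContinuousSMul G Y]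
    (hX : IsProperMap (fun p : X × G => (p.1, p.2 • p.1)))
    (hcocompact : ∃ F : Set Y, IsCompact F ∧ ∀ y : Y, ∃ g : G, ∃ z ∈ F, g • z = y)
    (f : Y → X) (hf : Continuous f)
    (hequiv : ∀ (g : G) (y : Y), f (g • y) = g • f y) :
    IsProperMap f := by
  obtain ⟨F, hF, hFcover⟩ := hcocompact
  choose g z hzF hgz using hFcover
  refine isProperMap_iff_ultrafilter.2 ⟨hf, fun 𝒰 x hx => ?_⟩
  obtain ⟨z₀, -, hz₀⟩ := hF.ultrafilter_le_nhds (Ultrafilter.map z 𝒰)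
    (le_principal_iff.2 (mem_map.2 (univ_mem' hzF)))
  have hz : Tendsto z 𝒰 (𝓝 z₀) := hz₀
  have hgfz : Tendsto (fun y => g y • f (z y)) 𝒰 (𝓝 x) := by
    simpa only [← hequiv, hgz] using hx
  obtain ⟨γ, hγ, hg⟩ := exists_tendsto_of_isProperMap_smul hX ((hf.tendsto z₀).comp hz) hgfz
  refine ⟨γ • z₀, by rw [hequiv, hγ], ?_⟩
  have hy : Tendsto (fun y => y) 𝒰 (𝓝 (γ • z₀)) := by simpa only [hgz] using hg.smul hz
  exact hy

/-- Let `G` be a topological group acting continuously on topological spaces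
`X` and `Y`, with the action on `X` proper and the action on `Y` proper and co-compact.
Then every `G`-equivariant continuous map `f : Y → X` is a proper map.
Properness of an action means the map `(z, γ) ↦ (z, γ • z)` is proper; co-compactness is
witnessed by a compact `F ⊆ Y` with `G • F = Y`. -/
theorem equivariant_map_is_proper
    {G X Y : Type*} [Group G] [TopologicalSpace G] [IsTopologicalGroup G]
    [TopologicalSpace X] [TopologicalSpace Y]
    [MulAction G X] [MulAction G Y] [ContinuousSMul G X] [ContinuousSMul G Y]
    (hX : IsProperMap (fun p : X × G => (p.1, p.2 • p.1)))
    (hY : IsProperMap (fun p : Y × G => (p.1, p.2 • p.1)))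
    (hcocompact : ∃ F : Set Y, IsCompact F ∧ ∀ y : Y, ∃ g : G, ∃ z ∈ F, g • z = y)
    (f : Y → X) (hf : Continuous f)
    (hequiv : ∀ (g : G) (y : Y), f (g • y) = g • f y) :
    IsProperMap f :=
  equivariant_map_is_proper_general hX hcocompact f hf hequiv
end

section
/- Let E be a Hilbert A-module with δ closed, δ² = 0, and δ + δ* self-adjoint. Then Im(δ) and Ker(δ*) are orthogonal, and every ξ ∈ Ker(δ + δ*) satisfies ξ ∈ Ker(δ) ∩ Ker(δ*). Consequently, if additionally Im(δ) = Ker(δ), then Ker(δ + δ*) = {0}. -/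
/-!
Since `δ² = 0`, for `ξ` in both domains `⟪δ* ξ, δ ξ⟫ = ⟪ξ, δ (δ ξ)⟫ = 0`, so by Pythagoras
`‖δ ξ + δ* ξ‖² = ‖δ ξ‖² + ‖δ* ξ‖²` and `(δ + δ*) ξ = 0` forces `δ ξ = δ* ξ = 0`. If moreover
`ξ = δ η` by exactness, then `‖ξ‖² = ⟪δ η, ξ⟫ = ⟪η, δ* ξ⟫ = 0`.
-/

open LinearPMap

theorem eq_zero_and_eq_zero_of_inner_eq_zero_of_add_eq_zero {𝕜 E : Type*} [RCLike 𝕜]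
    [NormedAddCommGroup E] [InnerProductSpace 𝕜 E] {x y : E}
    (h : inner 𝕜 x y = 0) (hxy : x + y = 0) : x = 0 ∧ y = 0 := by
  have hsum : ‖x‖ * ‖x‖ + ‖y‖ * ‖y‖ = 0 := by
    rw [← norm_add_sq_eq_norm_sq_add_norm_sq_of_inner_eq_zero x y h, hxy, norm_zero, mul_zero]
  constructor <;> rw [← norm_eq_zero] <;> nlinarith [norm_nonneg x, norm_nonneg y]

namespace LinearPMap

variable {𝕜 E F : Type*} [RCLike 𝕜] [NormedAddCommGroup E] [InnerProductSpace 𝕜 E]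
  [NormedAddCommGroup F] [InnerProductSpace 𝕜 F] [CompleteSpace E]

theorem inner_apply_eq_zero_of_adjoint_apply_eq_zero {T : E →ₗ.[𝕜] F}
    (hT : Dense (T.domain : Set E)) (x : T.domain) {y : T†.domain} (hy : T† y = 0) :
    inner 𝕜 (T x) (y : F) = 0 := by
  rw [(adjoint_isFormalAdjoint hT).symm x y, hy, inner_zero_right]

theorem inner_adjoint_apply_apply_eq_zero_of_apply_apply_eq_zero {T : E →ₗ.[𝕜] E}
    (hT : Dense (T.domain : Set E)) (y : T†.domain) {x : T.domain} (hx : T x ∈ T.domain)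
    (hTT : T ⟨T x, hx⟩ = 0) : inner 𝕜 (T† y) (T x) = 0 := by
  rw [adjoint_isFormalAdjoint hT y ⟨T x, hx⟩, hTT, inner_zero_right]

end LinearPMap

theorem ker_of_delta_plus_adjoint_general
    {E : Type*} [NormedAddCommGroup E] [InnerProductSpace ℂ E] [CompleteSpace E]
    (δ : E →ₗ.[ℂ] E)
    (hdense : Dense (δ.domain : Set E))
    (hIm : ∀ x : δ.domain, δ x ∈ δ.domain)
    (hsq : ∀ (x : δ.domain) (h : δ x ∈ δ.domain), δ ⟨δ x, h⟩ = 0) :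
    -- `Im(δ) ⟂ Ker(δ*)`
    (∀ (x : δ.domain) (ν : (δ†).domain), δ† ν = 0 → (inner ℂ (δ x) (ν : E) : ℂ) = 0) ∧
    -- every `ξ ∈ Ker(δ + δ*)` lies in `Ker δ ∩ Ker δ*`
    (∀ (ξ : E) (h1 : ξ ∈ δ.domain) (h2 : ξ ∈ (δ†).domain),
      δ ⟨ξ, h1⟩ + δ† ⟨ξ, h2⟩ = 0 → δ ⟨ξ, h1⟩ = 0 ∧ δ† ⟨ξ, h2⟩ = 0) ∧
    -- if `Im(δ) = Ker(δ)` then `Ker(δ + δ*) = {0}`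
    ({x : E | ∃ y : δ.domain, δ y = x} = {x : E | ∃ hx : x ∈ δ.domain, δ ⟨x, hx⟩ = 0} →
      ∀ (ξ : E) (h1 : ξ ∈ δ.domain) (h2 : ξ ∈ (δ†).domain),
        δ ⟨ξ, h1⟩ + δ† ⟨ξ, h2⟩ = 0 → ξ = 0) := by
  have hperp : ∀ (x : δ.domain) (ν : (δ†).domain), δ† ν = 0 → inner ℂ (δ x) (ν : E) = 0 :=
    fun x _ hν => inner_apply_eq_zero_of_adjoint_apply_eq_zero hdense x hν
  have hker : ∀ (ξ : E) (h1 : ξ ∈ δ.domain) (h2 : ξ ∈ (δ†).domain),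
      δ ⟨ξ, h1⟩ + δ† ⟨ξ, h2⟩ = 0 → δ ⟨ξ, h1⟩ = 0 ∧ δ† ⟨ξ, h2⟩ = 0 := fun ξ h1 h2 hsum =>
    eq_zero_and_eq_zero_of_inner_eq_zero_of_add_eq_zero (inner_eq_zero_symm.mp
      (inner_adjoint_apply_apply_eq_zero_of_apply_apply_eq_zero hdense ⟨ξ, h2⟩ _
        (hsq ⟨ξ, h1⟩ (hIm ⟨ξ, h1⟩)))) hsum
  refine ⟨hperp, hker, fun hexact ξ h1 h2 hsum => ?_⟩
  obtain ⟨hδξ, hδ'ξ⟩ := hker ξ h1 h2 hsum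
  obtain ⟨η, rfl⟩ : ξ ∈ {x : E | ∃ y : δ.domain, δ y = x} := hexact ▸ ⟨h1, hδξ⟩
  exact inner_self_eq_zero.mp (hperp η ⟨δ η, h2⟩ hδ'ξ)

/-- (Hilbert module specialised to a Hilbert space, i.e. `A = ℂ`.)
Let `δ` be a densely defined closed operator with `δ² = 0` and `δ + δ*` self-adjoint.
Then `Im(δ)` and `Ker(δ*)` are orthogonal, every `ξ ∈ Ker(δ + δ*)` lies in
`Ker(δ) ∩ Ker(δ*)`, and if moreover `Im(δ) = Ker(δ)` then `Ker(δ + δ*) = {0}`. -/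
theorem ker_of_delta_plus_adjoint
    {E : Type*} [NormedAddCommGroup E] [InnerProductSpace ℂ E] [CompleteSpace E]
    (δ : E →ₗ.[ℂ] E)
    (hdense : Dense (δ.domain : Set E))
    (hclosed : δ.IsClosed)
    (hIm : ∀ x : δ.domain, δ x ∈ δ.domain)
    (hsq : ∀ (x : δ.domain) (h : δ x ∈ δ.domain), δ ⟨δ x, h⟩ = 0)
    (hsa : IsSelfAdjoint (δ + δ†)) :
    -- `Im(δ) ⟂ Ker(δ*)`
    (∀ (x : δ.domain) (ν : (δ†).domain), δ† ν = 0 → (inner ℂ (δ x) (ν : E) : ℂ) = 0) ∧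
    -- every `ξ ∈ Ker(δ + δ*)` lies in `Ker δ ∩ Ker δ*`
    (∀ (ξ : E) (h1 : ξ ∈ δ.domain) (h2 : ξ ∈ (δ†).domain),
      δ ⟨ξ, h1⟩ + δ† ⟨ξ, h2⟩ = 0 → δ ⟨ξ, h1⟩ = 0 ∧ δ† ⟨ξ, h2⟩ = 0) ∧
    -- if `Im(δ) = Ker(δ)` then `Ker(δ + δ*) = {0}`
    ({x : E | ∃ y : δ.domain, δ y = x} = {x : E | ∃ hx : x ∈ δ.domain, δ ⟨x, hx⟩ = 0} →
      ∀ (ξ : E) (h1 : ξ ∈ δ.domain) (h2 : ξ ∈ (δ†).domain),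
        δ ⟨ξ, h1⟩ + δ† ⟨ξ, h2⟩ = 0 → ξ = 0) :=
  ker_of_delta_plus_adjoint_general δ hdense hIm hsq
end

section
/- Let ν_t(ξ, η) = (δ_X ξ + tT′η, −δ_Y η) define the operator ∇_t = [[δ_X, tT′],[0, −δ_Y]] on E_X ⊕ E_Y, where T intertwines δ_X and δ_Y and [T′] : Ker(δ_Y)/Im(δ_Y) → Ker(δ_X)/Im(δ_X) is an isomorphism. Then for every t > 0, Ker(∇_t) = Im(∇_t). -/
open ContinuousLinearMap

namespace LinearMap

variable {K EX EY : Type*} [Field K] [AddCommGroup EX] [Module K EX] [AddCommGroup EY] [Module K EY]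
  (δX : EX →ₗ[K] EX) (δY : EY →ₗ[K] EY) (T' : EY →ₗ[K] EX) (c : K)

/-- The differential `[[δX, c T'], [0, -δY]]` of the mapping cone of the chain map `T'`. -/
def coneDifferential : EX × EY →ₗ[K] EX × EY :=
  (δX.coprod (c • T')).prod (-(δY ∘ₗ snd K EX EY))

@[simp]
theorem coneDifferential_apply (p : EX × EY) :
    coneDifferential δX δY T' c p = (δX p.1 + c • T' p.2, -δY p.2) :=
  rfl

variable {δX δY T' c}

theorem coneDifferential_comp_self (hX : δX ∘ₗ δX = 0) (hY : δY ∘ₗ δY = 0)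
    (hT' : T' ∘ₗ δY = δX ∘ₗ T') :
    coneDifferential δX δY T' c ∘ₗ coneDifferential δX δY T' c = 0 := by
  refine LinearMap.ext fun p => Prod.ext ?_ ?_
  · have hT'p := congr($hT' p.2)
    simp only [comp_apply, coneDifferential_apply, map_add, map_smul, map_neg, zero_apply,
      Prod.fst_zero] at hT'p ⊢
    rw [← hT'p, ← comp_apply δX δX, hX]
    simp
  · simp [← comp_apply δY δY, hY]

theorem range_coneDifferential_le_ker (hX : δX ∘ₗ δX = 0) (hY : δY ∘ₗ δY = 0)
    (hT' : T' ∘ₗ δY = δX ∘ₗ T') :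
    range (coneDifferential δX δY T' c) ≤ ker (coneDifferential δX δY T' c) :=
  range_le_ker_iff.mpr (coneDifferential_comp_self hX hY hT')

/-- A cycle `(x, y)` of the cone gives a cohomology class `[y]` killed by `[T']`, so `y = δY b`;
then `x + c T' b` is a `δX`-cycle, which surjectivity of `[T']` writes as `T' w + δX a`. -/
theorem ker_coneDifferential_le_range (hc : c ≠ 0) (hT' : T' ∘ₗ δY = δX ∘ₗ T')
    (hinj : ∀ y ∈ ker δY, T' y ∈ range δX → y ∈ range δY)
    (hsurj : ∀ x ∈ ker δX, ∃ y ∈ ker δY, x - T' y ∈ range δX) :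
    ker (coneDifferential δX δY T' c) ≤ range (coneDifferential δX δY T' c) := by
  rintro ⟨x, y⟩ hxy
  simp only [mem_ker, coneDifferential_apply, Prod.mk_eq_zero, neg_eq_zero] at hxy
  obtain ⟨hxy, hy⟩ := hxy
  have hδx : δX x = -(c • T' y) := eq_neg_of_add_eq_zero_left hxy
  have hT'y : T' y ∈ range δX :=
    ⟨-c⁻¹ • x, by rw [map_smul, hδx, smul_neg, neg_smul, neg_neg, inv_smul_smul₀ hc]⟩
  obtain ⟨b, rfl⟩ := hinj y hy hT'y
  have hz : δX (x + c • T' b) = 0 := by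
    rw [map_add, map_smul, ← comp_apply δX T', ← hT', comp_apply, hxy]
  obtain ⟨w, hw, a, ha⟩ := hsurj _ hz
  refine ⟨(a, -b + c⁻¹ • w), ?_⟩
  rw [mem_ker] at hw
  simp only [coneDifferential_apply, ha, map_add, map_neg, map_smul, hw, smul_zero, add_zero,
    neg_neg, smul_add, smul_neg, smul_inv_smul₀ hc]
  congr 1
  abel

theorem ker_coneDifferential_eq_range (hc : c ≠ 0) (hX : δX ∘ₗ δX = 0) (hY : δY ∘ₗ δY = 0)
    (hT' : T' ∘ₗ δY = δX ∘ₗ T')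
    (hinj : ∀ y ∈ ker δY, T' y ∈ range δX → y ∈ range δY)
    (hsurj : ∀ x ∈ ker δX, ∃ y ∈ ker δY, x - T' y ∈ range δX) :
    ker (coneDifferential δX δY T' c) = range (coneDifferential δX δY T' c) :=
  (ker_coneDifferential_le_range hc hT' hinj hsurj).antisymm
    (range_coneDifferential_le_ker hX hY hT')

end LinearMap

theorem ker_nabla_eq_im_nabla_general
    {EX EY : Type*} [NormedAddCommGroup EX] [InnerProductSpace ℂ EX]
    [NormedAddCommGroup EY] [InnerProductSpace ℂ EY]
    (δX : EX →L[ℂ] EX) (δY : EY →L[ℂ] EY)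
    (T' : EY →L[ℂ] EX)
    (hδX2 : δX ∘L δX = 0) (hδY2 : δY ∘L δY = 0)
    (hT' : T' ∘L δY = δX ∘L T')
    -- `[T′]` is injective on cohomology:
    (hinj : ∀ y ∈ LinearMap.ker (δY : EY →ₗ[ℂ] EY), T' y ∈ LinearMap.range (δX : EX →ₗ[ℂ] EX) → y ∈ LinearMap.range (δY : EY →ₗ[ℂ] EY))
    -- `[T′]` is surjective on cohomology:
    (hsurj : ∀ x ∈ LinearMap.ker (δX : EX →ₗ[ℂ] EX), ∃ y ∈ LinearMap.ker (δY : EY →ₗ[ℂ] EY), x - T' y ∈ LinearMap.range (δX : EX →ₗ[ℂ] EX))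
    (t : ℝ) (ht : 0 < t) :
    ∀ p : EX × EY,
      (δX p.1 + (t : ℂ) • T' p.2, -(δY p.2)) = (0 : EX × EY) ↔
        ∃ q : EX × EY, (δX q.1 + (t : ℂ) • T' q.2, -(δY q.2)) = p := by
  have ht' : (t : ℂ) ≠ 0 := by exact_mod_cast ht.ne'
  have hXₗ := congr(($hδX2 : EX →ₗ[ℂ] EX))
  have hYₗ := congr(($hδY2 : EY →ₗ[ℂ] EY))
  have hT'ₗ := congr(($hT' : EY →ₗ[ℂ] EX))
  simp only [toLinearMap_comp, toLinearMap_zero] at hXₗ hYₗ hT'ₗ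
  have hker := LinearMap.ker_coneDifferential_eq_range ht' hXₗ hYₗ hT'ₗ hinj hsurj
  intro p
  simpa using SetLike.ext_iff.mp hker p

/-- (Hilbert modules specialised to Hilbert spaces.)
Let `∇_t (ξ, η) = (δ_X ξ + t T′ η, −δ_Y η)` on `E_X ⊕ E_Y`, where `T` intertwines
`δ_X, δ_Y`, `T′` its `Q`-adjoint intertwines `δ_Y, δ_X` and induces an isomorphism
`Ker(δ_Y)/Im(δ_Y) → Ker(δ_X)/Im(δ_X)`.  Then for every `t > 0`,
`Ker(∇_t) = Im(∇_t)`. -/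
theorem ker_nabla_eq_im_nabla
    {EX EY : Type*} [NormedAddCommGroup EX] [InnerProductSpace ℂ EX]
    [NormedAddCommGroup EY] [InnerProductSpace ℂ EY]
    (δX : EX →L[ℂ] EX) (δY : EY →L[ℂ] EY)
    (T : EX →L[ℂ] EY) (T' : EY →L[ℂ] EX)
    (hδX2 : δX ∘L δX = 0) (hδY2 : δY ∘L δY = 0)
    (hT : T ∘L δX = δY ∘L T) (hT' : T' ∘L δY = δX ∘L T')
    -- `[T′]` is injective on cohomology:
    (hinj : ∀ y ∈ LinearMap.ker (δY : EY →ₗ[ℂ] EY), T' y ∈ LinearMap.range (δX : EX →ₗ[ℂ] EX) → y ∈ LinearMap.range (δY : EY →ₗ[ℂ] EY))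
    -- `[T′]` is surjective on cohomology:
    (hsurj : ∀ x ∈ LinearMap.ker (δX : EX →ₗ[ℂ] EX), ∃ y ∈ LinearMap.ker (δY : EY →ₗ[ℂ] EY), x - T' y ∈ LinearMap.range (δX : EX →ₗ[ℂ] EX))
    (t : ℝ) (ht : 0 < t) :
    ∀ p : EX × EY,
      (δX p.1 + (t : ℂ) • T' p.2, -(δY p.2)) = (0 : EX × EY) ↔
        ∃ q : EX × EY, (δX q.1 + (t : ℂ) • T' q.2, -(δY q.2)) = p :=
  ker_nabla_eq_im_nabla_general δX δY T' hδX2 hδY2 hT' hinj hsurj t ht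
end
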